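/- arXiv:1107.3009 — 2 statements merged into one kernel-verified Lean document; each statement's English description precedes it below -/
import Mathlib

section
/- Let R be a commutative ring, n ≥ 3 a natural number, and let 𝔞, 𝔟 be two ideals of R. Then E(n,R,𝔞𝔟) ≤ E(n, 𝔞+𝔟): the relative elementary subgroup of level the product ideal 𝔞𝔟 is contained in the (non-relative) elementary subgroup generated by transvections with parameters in 𝔞+𝔟. (Type A_{n−1} instance of the paper's Lemma: for Φ ≠ C_l, E(Φ,R,𝔞𝔟) ≤ E(Φ,𝔞+𝔟).) -/
open Matrix

/-- `SL n R` : the special linear group of degree `n` over `R`,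
the simply connected Chevalley group of type `A_{n-1}`. -/
abbrev SL (n : ℕ) (R : Type*) [CommRing R] := Matrix.SpecialLinearGroup (Fin n) R

/-- The elementary transvection `e_{ij}(a) = 1 + a·E_{ij}` as an element of `SL n R`. -/
def elemTransv {n : ℕ} {R : Type*} [CommRing R] (i j : Fin n) (h : i ≠ j) (a : R) :
    SL n R :=
  ⟨Matrix.transvection i j a, Matrix.det_transvection_of_ne i j h a⟩

/-- The set of elementary transvections with parameters in `S`. -/
def transvSet (n : ℕ) {R : Type*} [CommRing R] (S : Set R) : Set (SL n R) :=
  { x | ∃ i j : Fin n, ∃ h : i ≠ j, ∃ a ∈ S, x = elemTransv i j h a }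

/-- `E(n,S)` : the subgroup generated by elementary transvections with parameters in `S`. -/
def Esub (n : ℕ) {R : Type*} [CommRing R] (S : Set R) : Subgroup (SL n R) :=
  Subgroup.closure (transvSet n S)

/-- `E(n,T,S)` : the normal closure of `E(n,S)` in `E(n,T)`, i.e. the subgroup
generated by the conjugates of elementary generators of level `S` by elements
of `E(n,T)`. -/
def relESet (n : ℕ) {R : Type*} [CommRing R] (T S : Set R) : Subgroup (SL n R) :=
  Subgroup.closure
    { x | ∃ g ∈ Esub n T, ∃ y ∈ transvSet n S, x = g * y * g⁻¹ }

/-- `E(n,R,I)` : the relative elementary subgroup, the normal closure of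
`E(n,I)` in the absolute elementary subgroup `E(n,R)`. -/
def relE (n : ℕ) {R : Type*} [CommRing R] (I : Ideal R) : Subgroup (SL n R) :=
  relESet n (Set.univ : Set R) (I : Set R)

/-- The reduction homomorphism `SL(n,R) → SL(n,R/I)`. -/
def redMap (n : ℕ) {R : Type*} [CommRing R] (I : Ideal R) : SL n R →* SL n (R ⧸ I) :=
  Matrix.SpecialLinearGroup.map (Ideal.Quotient.mk I)

/-- `SL(n,R,I)` : the principal congruence subgroup of level `I`. -/
def SLcong (n : ℕ) {R : Type*} [CommRing R] (I : Ideal R) : Subgroup (SL n R) :=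
  (redMap n I).ker

/-- `C(n,R,I)` : the full congruence subgroup of level `I`. -/
def Ccong (n : ℕ) {R : Type*} [CommRing R] (I : Ideal R) : Subgroup (SL n R) :=
  Subgroup.comap (redMap n I) (Subgroup.center (SL n (R ⧸ I)))

/-!
Suslin's argument. For `ξ ∈ 𝔞`, `η ∈ 𝔟` and `g ∈ SL(n,R)`, the conjugate `g e_ij(ξη) g⁻¹` equals
`1 + (ξv)(ηr)ᵀ`, where `v` is the `i`-th column of `g` and `q`, `r` are the `i`-th and `j`-th rows
of `g⁻¹`, so that `q ⬝ v = 1` and `r ⬝ v = 0`. Then `r` is a sum of vectors `t` orthogonal to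
`v`, each supported on two coordinates; as `(vtᵀ)(vt'ᵀ) = 0` for any two of them,
`1 + (ξv)(ηr)ᵀ` is the product of the factors `1 + (ξv)(ηt)ᵀ`. As `n ≥ 3` there is an index `m`
with `t_m = 0`; splitting off the `m`-th coordinate of `u = ξv` writes `1 + utᵀ` as the
commutator of `1 + u'e_mᵀ` and `1 + e_mtᵀ` times `1 + u_m e_mtᵀ`, all of them products of
transvections with parameters in `𝔞 ∪ 𝔟`. Sums `c = ∑ ξη` are handled by additivity of
`c ↦ e_ij(c)`.
-/

section UnipotentProducts

variable {A : Type*} [Ring A]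

theorem one_add_mul_one_add_of_mul_eq_zero {x y : A} (h : x * y = 0) :
    (1 + x) * (1 + y) = 1 + (x + y) := by
  rw [add_mul, one_mul, mul_add, mul_one, h, add_zero, add_assoc, add_comm y]

theorem one_add_add_mem {M : Submonoid A} {x y : A} (hx : 1 + x ∈ M) (hy : 1 + y ∈ M)
    (h : x * y = 0) : 1 + (x + y) ∈ M :=
  one_add_mul_one_add_of_mul_eq_zero h ▸ mul_mem hx hy

theorem one_add_sum_mem {M : Submonoid A} {ι : Type*} [DecidableEq ι] {f : ι → A}
    {s : Finset ι} (hf : ∀ i ∈ s, 1 + f i ∈ M) (h : ∀ i ∈ s, ∀ j ∈ s, f i * f j = 0) :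
    1 + ∑ i ∈ s, f i ∈ M := by
  induction s using Finset.induction_on with
  | empty => simp [M.one_mem]
  | insert i s hi ih =>
    rw [Finset.sum_insert hi]
    refine one_add_add_mem (hf i (s.mem_insert_self i))
      (ih (fun j hj => hf j (Finset.mem_insert_of_mem hj))
        (fun j hj k hk => h j (Finset.mem_insert_of_mem hj) k (Finset.mem_insert_of_mem hk))) ?_
    rw [Finset.mul_sum]
    exact Finset.sum_eq_zero fun j hj =>
      h i (s.mem_insert_self i) j (Finset.mem_insert_of_mem hj)

theorem commutator_one_add {x y : A} (hx : x * x = 0) (hy : y * y = 0) (hyx : y * x = 0) :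
    (1 + x) * (1 + y) * (1 - x) * (1 - y) = 1 + x * y := by
  have hxyx : x * y * x = 0 := by rw [mul_assoc, hyx, mul_zero]
  have hxyy : x * y * y = 0 := by rw [mul_assoc, hy, mul_zero]
  simp only [mul_add, add_mul, mul_sub, sub_mul, mul_one, one_mul, hx, hy, hyx, hxyx, hxyy,
    zero_mul]
  abel

variable {G : Type*} [Group G] (H : Subgroup G) (φ : G →* A)

theorem one_sub_mem_map_of_one_add_mem {x : A} (hx : x * x = 0)
    (h : 1 + x ∈ H.toSubmonoid.map φ) : 1 - x ∈ H.toSubmonoid.map φ := by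
  obtain ⟨z, hz, hzx⟩ := h
  refine ⟨z⁻¹, H.inv_mem hz, left_inv_eq_right_inv (a := φ z) (b := φ z⁻¹) ?_ ?_⟩
  · rw [← map_mul, inv_mul_cancel, map_one]
  · calc φ z * (1 - x) = (1 + x) * (1 - x) := by rw [hzx]
      _ = 1 - x * x := by noncomm_ring
      _ = 1 := by rw [hx, sub_zero]

theorem one_add_mul_mem_map {x y : A} (hx : x * x = 0) (hy : y * y = 0) (hyx : y * x = 0)
    (hxM : 1 + x ∈ H.toSubmonoid.map φ) (hyM : 1 + y ∈ H.toSubmonoid.map φ) :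
    1 + x * y ∈ H.toSubmonoid.map φ :=
  commutator_one_add hx hy hyx ▸ mul_mem (mul_mem (mul_mem hxM hyM)
    (one_sub_mem_map_of_one_add_mem H φ hx hxM)) (one_sub_mem_map_of_one_add_mem H φ hy hyM)

end UnipotentProducts

section Vectors

variable {R : Type*} [CommRing R] {ι : Type*}

theorem vecMulVec_sum {κ : Type*} (u : ι → R) (s : Finset κ) (w : κ → ι → R) :
    vecMulVec u (∑ k ∈ s, w k) = ∑ k ∈ s, vecMulVec u (w k) := by
  ext p q
  simp [vecMulVec_apply, Finset.mul_sum, Matrix.sum_apply]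

theorem sum_vecMulVec {κ : Type*} (s : Finset κ) (u : κ → ι → R) (w : ι → R) :
    vecMulVec (∑ k ∈ s, u k) w = ∑ k ∈ s, vecMulVec (u k) w := by
  ext p q
  simp [vecMulVec_apply, Finset.sum_mul, Matrix.sum_apply]

variable [DecidableEq ι]

theorem transvection_eq_one_add_vecMulVec (i j : ι) (c : R) :
    transvection i j c = 1 + vecMulVec (Pi.single i 1) (Pi.single j c) := by
  rw [transvection]
  congr 1
  ext p q
  simp only [single_apply, vecMulVec_apply, Pi.single_apply, ite_and]
  split_ifs <;> simp_all

/-- Suslin's decomposition: the vectors `suslinVec q v r k l` are supported on `{k, l}` and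
orthogonal to `v`, and they sum to `r` as soon as `q ⬝ᵥ v = 1` and `r ⬝ᵥ v = 0`. -/
def suslinVec (q v r : ι → R) (k l : ι) : ι → R :=
  (q k * r l) • (v k • Pi.single l 1 - v l • Pi.single k 1)

theorem suslinVec_apply_of_ne (q v r : ι → R) {k l p : ι} (hk : p ≠ k) (hl : p ≠ l) :
    suslinVec q v r k l p = 0 := by
  simp [suslinVec, hk, hl]

variable [Fintype ι]

theorem mul_one_add_vecMulVec_mul {g g' : Matrix ι ι R} (h : g * g' = 1) (x y : ι → R) :
    g * (1 + vecMulVec x y) * g' = 1 + vecMulVec (g *ᵥ x) (y ᵥ* g') := by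
  rw [mul_add, mul_one, add_mul, h, mul_vecMulVec, vecMulVec_mul]

theorem vecMul_dotProduct_mulVec {g g' : Matrix ι ι R} (h : g' * g = 1) (x y : ι → R) :
    (y ᵥ* g') ⬝ᵥ (g *ᵥ x) = y ⬝ᵥ x := by
  rw [dotProduct_mulVec, vecMul_vecMul, h, vecMul_one]

theorem suslinVec_dotProduct (q v r : ι → R) (k l : ι) : suslinVec q v r k l ⬝ᵥ v = 0 := by
  simp only [suslinVec, smul_dotProduct, sub_dotProduct, single_dotProduct, smul_eq_mul]
  ring

theorem sum_suslinVec {q v r : ι → R} (hqv : q ⬝ᵥ v = 1) (hrv : r ⬝ᵥ v = 0) :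
    ∑ k, ∑ l, suslinVec q v r k l = r := by
  ext p
  calc (∑ k, ∑ l, suslinVec q v r k l) p
      = ∑ k, ∑ l, (q k * v k * (r l * (Pi.single l 1 : ι → R) p)
          - q k * (Pi.single k 1 : ι → R) p * (r l * v l)) := by
        simp only [suslinVec, Finset.sum_apply, Pi.smul_apply, Pi.sub_apply, smul_eq_mul]
        exact Finset.sum_congr rfl fun k _ => Finset.sum_congr rfl fun l _ => by ring
    _ = (q ⬝ᵥ v) * r p - q p * (r ⬝ᵥ v) := by
        simp [Finset.sum_sub_distrib, ← Finset.mul_sum, ← Finset.sum_mul, dotProduct,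
          Pi.single_apply]
    _ = r p := by rw [hqv, hrv, one_mul, mul_zero, sub_zero]

end Vectors

section ElementaryMatrices

variable {R : Type*} [CommRing R] {n : ℕ}

/-- `E(n,S)` inside the matrix ring, where rank-one perturbations of `1` can be added. -/
abbrev EsubMat (n : ℕ) (S : Set R) : Submonoid (Matrix (Fin n) (Fin n) R) :=
  (Esub n S).toSubmonoid.map SpecialLinearGroup.coeMonoidHom

theorem coe_mem_EsubMat {S : Set R} {g : SL n R} :
    (g : Matrix (Fin n) (Fin n) R) ∈ EsubMat n S ↔ g ∈ Esub n S :=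
  Submonoid.mem_map_iff_mem SpecialLinearGroup.coeMonoidHom_injective

theorem one_add_vecMulVec_single_single_mem {S : Set R} {i j : Fin n} (hij : i ≠ j) {c : R}
    (hc : c ∈ S) : 1 + vecMulVec (Pi.single i 1) (Pi.single j c) ∈ EsubMat n S :=
  ⟨elemTransv i j hij c, Subgroup.subset_closure ⟨i, j, hij, c, hc, rfl⟩,
    transvection_eq_one_add_vecMulVec i j c⟩

theorem one_add_single_vecMulVec_mem {S : Set R} {m : Fin n} {s : Fin n → R} (hm : s m = 0)
    (hs : ∀ p, s p ∈ S) : 1 + vecMulVec (Pi.single m 1) s ∈ EsubMat n S := by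
  rw [← Finset.univ_sum_single s, vecMulVec_sum]
  refine one_add_sum_mem (fun q _ => ?_) (fun q _ q' _ => ?_)
  · rcases eq_or_ne q m with rfl | hq
    · simp [hm]
    · exact one_add_vecMulVec_single_single_mem hq.symm (hs q)
  · rw [vecMulVec_mul_vecMulVec, single_dotProduct, Pi.single_apply]
    split_ifs with h
    · subst h; simp [hm]
    · simp

theorem one_add_vecMulVec_single_mem {S : Set R} {m : Fin n} {u : Fin n → R} (hm : u m = 0)
    (hu : ∀ p, u p ∈ S) : 1 + vecMulVec u (Pi.single m 1) ∈ EsubMat n S := by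
  rw [← Finset.univ_sum_single u, sum_vecMulVec]
  refine one_add_sum_mem (fun q _ => ?_) (fun q _ q' _ => ?_)
  · rcases eq_or_ne q m with rfl | hq
    · simp [hm]
    · have h : vecMulVec (Pi.single q (u q)) (Pi.single m 1)
          = vecMulVec (Pi.single q 1) (Pi.single m (u q)) := by
        ext p r
        simp [vecMulVec_apply, Pi.single_apply]
      exact h ▸ one_add_vecMulVec_single_single_mem hq (hu q)
  · rw [vecMulVec_mul_vecMulVec, single_dotProduct, Pi.single_apply]
    split_ifs with h
    · subst h; simp [hm]
    · simp

theorem one_add_vecMulVec_mem_of_apply_eq_zero_of_apply_eq_zero {S : Set R} {m : Fin n}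
    {u s : Fin n → R} (hum : u m = 0) (hsm : s m = 0) (hsu : s ⬝ᵥ u = 0) (hu : ∀ p, u p ∈ S)
    (hs : ∀ p, s p ∈ S) : 1 + vecMulVec u s ∈ EsubMat n S := by
  have hprod : vecMulVec u (Pi.single m 1) * vecMulVec (Pi.single m 1) s = vecMulVec u s := by
    rw [vecMulVec_mul_vecMulVec, single_dotProduct, one_mul, Pi.single_eq_same, one_smul]
  rw [← hprod]
  refine one_add_mul_mem_map _ _ ?_ ?_ ?_ (one_add_vecMulVec_single_mem hum hu)
    (one_add_single_vecMulVec_mem hsm hs)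
  · rw [vecMulVec_mul_vecMulVec, single_dotProduct, one_mul, hum, zero_smul, vecMulVec_zero]
  · rw [vecMulVec_mul_vecMulVec, dotProduct_single, hsm, zero_mul, zero_smul, vecMulVec_zero]
  · rw [vecMulVec_mul_vecMulVec, hsu, zero_smul, vecMulVec_zero]

theorem one_add_vecMulVec_mem_of_apply_eq_zero {I : Ideal R} {m : Fin n} {u t : Fin n → R}
    (htm : t m = 0) (htu : t ⬝ᵥ u = 0) (hu : ∀ p, u p ∈ I) (ht : ∀ p, t p ∈ I) :
    1 + vecMulVec u t ∈ EsubMat n (I : Set R) := by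
  set u' := Function.update u m 0
  have hsplit : u = u' + Pi.single m (u m) := by
    ext p
    rcases eq_or_ne p m with rfl | hp <;> simp [u', *]
  have htu' : t ⬝ᵥ u' = 0 := by
    rwa [hsplit, dotProduct_add, dotProduct_single, htm, zero_mul, add_zero] at htu
  have hrow : vecMulVec (Pi.single m (u m)) t = vecMulVec (Pi.single m 1) (u m • t) := by
    ext p q
    simp [vecMulVec_apply, Pi.single_apply]
  rw [hsplit, add_vecMulVec, hrow]
  refine one_add_add_mem ?_ ?_ ?_
  · refine one_add_vecMulVec_mem_of_apply_eq_zero_of_apply_eq_zero (m := m)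
      (Function.update_self m 0 u) htm htu' (fun p => ?_) ht
    rcases eq_or_ne p m with rfl | hp
    · simp [u', I.zero_mem]
    · simpa [u', hp] using hu p
  · exact one_add_single_vecMulVec_mem (by simp [htm]) fun p => I.mul_mem_left _ (ht p)
  · rw [vecMulVec_mul_vecMulVec, dotProduct_single, htm, zero_mul, zero_smul, vecMulVec_zero]

theorem one_add_vecMulVec_smul_smul_mem (hn : 2 < n) {a b : Ideal R} {ξ η : R} (hξ : ξ ∈ a)
    (hη : η ∈ b) {q v r : Fin n → R} (hqv : q ⬝ᵥ v = 1) (hrv : r ⬝ᵥ v = 0) :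
    1 + vecMulVec (ξ • v) (η • r) ∈ EsubMat n ((a + b : Ideal R) : Set R) := by
  rw [← sum_suslinVec hqv hrv, ← Fintype.sum_prod_type', Finset.smul_sum, vecMulVec_sum]
  refine one_add_sum_mem (fun kl _ => ?_) (fun kl _ kl' _ => ?_)
  · obtain ⟨m, hmk, hml⟩ := Fin.exists_ne_and_ne_of_two_lt kl.1 kl.2 hn
    refine one_add_vecMulVec_mem_of_apply_eq_zero (m := m) ?_ ?_ (fun p => ?_) (fun p => ?_)
    · simp [suslinVec_apply_of_ne q v r hmk hml]
    · rw [smul_dotProduct, dotProduct_smul, suslinVec_dotProduct, smul_zero, smul_zero]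
    · exact Ideal.mem_sup_left (a.mul_mem_right _ hξ)
    · exact Ideal.mem_sup_right (b.mul_mem_right _ hη)
  · rw [vecMulVec_mul_vecMulVec, smul_dotProduct, dotProduct_smul, suslinVec_dotProduct,
      smul_zero, smul_zero, zero_smul, vecMulVec_zero]

theorem conj_elemTransv_mul_mem (hn : 2 < n) {a b : Ideal R} (g : SL n R) {i j : Fin n}
    (hij : i ≠ j) {ξ η : R} (hξ : ξ ∈ a) (hη : η ∈ b) :
    g * elemTransv i j hij (ξ * η) * g⁻¹ ∈ Esub n ((a + b : Ideal R) : Set R) := by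
  set G : Matrix (Fin n) (Fin n) R := ↑g
  set G' : Matrix (Fin n) (Fin n) R := ↑g⁻¹
  have hGG' : G * G' = 1 := congrArg Subtype.val (mul_inv_cancel g)
  have hG'G : G' * G = 1 := congrArg Subtype.val (inv_mul_cancel g)
  have htransv : transvection i j (ξ * η)
      = 1 + vecMulVec (ξ • Pi.single i 1) (η • Pi.single j 1) := by
    rw [transvection_eq_one_add_vecMulVec]
    congr 1
    ext p q
    simp [vecMulVec_apply, Pi.single_apply]
  rw [← coe_mem_EsubMat]
  change G * transvection i j (ξ * η) * G' ∈ _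
  rw [htransv, mul_one_add_vecMulVec_mul hGG', mulVec_smul, smul_vecMul]
  refine one_add_vecMulVec_smul_smul_mem hn hξ hη (q := Pi.single i 1 ᵥ* G') ?_ ?_
  · rw [vecMul_dotProduct_mulVec hG'G, single_dotProduct, Pi.single_eq_same, one_mul]
  · rw [vecMul_dotProduct_mulVec hG'G, single_dotProduct, Pi.single_eq_of_ne hij.symm, mul_zero]

theorem elemTransv_add {i j : Fin n} (hij : i ≠ j) (x y : R) :
    elemTransv i j hij (x + y) = elemTransv i j hij x * elemTransv i j hij y :=
  Subtype.ext (transvection_mul_transvection_same i j hij x y).symm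

end ElementaryMatrices

/-- For a commutative ring `R`, `n ≥ 3` and ideals `𝔞, 𝔟 ⊴ R`,
`E(n,R,𝔞𝔟) ≤ E(n,𝔞+𝔟)`. -/
theorem relE_mul_le_Esub_add
    {R : Type*} [CommRing R] (n : ℕ) (hn : 3 ≤ n) (a b : Ideal R) :
    relE n (a * b) ≤ Esub n ((a + b : Ideal R) : Set R) := by
  refine (Subgroup.closure_le _).2 ?_
  rintro _ ⟨g, -, _, ⟨i, j, hij, c, hc, rfl⟩, rfl⟩
  refine Submodule.mul_induction_on hc (fun ξ hξ η hη => conj_elemTransv_mul_mem hn g hij hξ hη)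
    fun x y hx hy => ?_
  rw [elemTransv_add, ← conj_mul]
  exact mul_mem hx hy
end

section
/- Let R be a commutative ring, n ≥ 3 a natural number, and 𝔞 an ideal of R. Then the following four subgroups of SL(n,R) coincide: (i) the full congruence subgroup C(n,R,𝔞); (ii) {g ∈ SL(n,R) : for all x ∈ E(n,R), the commutator [g,x] lies in E(n,R,𝔞)}; (iii) {g ∈ SL(n,R) : for all x ∈ E(n,R), [g,x] ∈ C(n,R,𝔞)}; (iv) {g ∈ SL(n,R) : for all x ∈ SL(n,R), [g,x] ∈ C(n,R,𝔞)}. (Type A_{n−1} instance of the paper's Lemma 9, the coincidence of the possible definitions of the full congruence subgroup.) -/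
open Matrix
open scoped commutatorElement

/-!
Reduction modulo `𝔞` identifies `C(n,R,𝔞)` with the preimage of the scalar matrices. If `[g, x]`
is central modulo `𝔞` for all elementary `x`, then, since `e_ij(s) = [e_im(s), e_mj(1)]` for a
third index `m`, the image of `g` commutes with every transvection and hence is scalar.

The substantial inclusion is `[C(n,R,𝔞), E(n,R)] ⊆ E(n,R,𝔞)`, and it suffices to check it on
generators: `[g, e_ij(t)] = (1 + t u vᵀ) e_ij(-t)`, where `u` is the `i`-th column of `g` and `v`
the `j`-th row of `g⁻¹`. With `w` the `i`-th row of `g⁻¹` (so `w ⬝ u = 1`, `v ⬝ u = 0`), Suslin's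
trick writes `v = ∑ v_k w_l (u_l e_k - u_k e_l)`, which splits `1 + t u vᵀ` into transvections
`1 + c u (u_l e_k - u_k e_l)ᵀ`. For a third index `m`, splitting off the `m`-th coordinate of `u`
leaves a commutator of a column and a row transvection through `e_m`, so these factors lie in
`E(n,R,𝔞)` when `c ∈ 𝔞`; this is the case for `(k,l) ≠ (j,i)` because `g` is scalar modulo `𝔞`.
The last factor, times `e_ij(-t)`, is congruent modulo `E(n,R,𝔞)` to
`[e_im(u_i), e_mj(c u_i)] e_ij(-t) = e_ij(u_i c u_i - t)`, and `u_i c u_i ≡ t` modulo `𝔞`.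
-/

section GroupLemmas
variable {G : Type*} [Group G]

theorem commutatorElement_mem_of_mem_closure {S : Set G} {N : Subgroup G}
    (hN : ∀ x ∈ Subgroup.closure S, ∀ y ∈ N, x * y * x⁻¹ ∈ N) {g : G}
    (hS : ∀ s ∈ S, ⁅g, s⁆ ∈ N) {x : G} (hx : x ∈ Subgroup.closure S) : ⁅g, x⁆ ∈ N := by
  induction hx using Subgroup.closure_induction with
  | mem s hs => exact hS s hs
  | one => simp
  | mul y z hy _ hgy hgz =>
    rw [show ⁅g, y * z⁆ = ⁅g, y⁆ * (y * ⁅g, z⁆ * y⁻¹) by group]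
    exact N.mul_mem hgy (hN y hy _ hgz)
  | inv y hy hgy =>
    rw [show ⁅g, y⁻¹⁆ = y⁻¹ * ⁅g, y⁆⁻¹ * y⁻¹⁻¹ by group]
    exact hN _ (inv_mem hy) _ (inv_mem hgy)

theorem commutatorElement_mul_mul_mul_inv_mem {H N : Subgroup G}
    (hN : ∀ h ∈ H, ∀ y ∈ N, h * y * h⁻¹ ∈ N) {p q x y : G} (hp : p ∈ H) (hq : q ∈ H)
    (hx : x ∈ N) (hy : y ∈ N) : ⁅p * x, q * y⁆ * ⁅p, q⁆⁻¹ ∈ N := by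
  rw [show ⁅p * x, q * y⁆ * ⁅p, q⁆⁻¹ = (p * x * p⁻¹) * ((p * q) * y * (p * q)⁻¹) *
      ((p * q) * x⁻¹ * (p * q)⁻¹) * ((p * q * p⁻¹) * y⁻¹ * (p * q * p⁻¹)⁻¹) by group]
  have hpq := H.mul_mem hp hq
  exact N.mul_mem (N.mul_mem (N.mul_mem (hN p hp x hx) (hN _ hpq y hy))
    (hN _ hpq _ (inv_mem hx))) (hN _ (H.mul_mem hpq (inv_mem hp)) _ (inv_mem hy))

theorem commutatorElement_mul_left_of_mem_center {z : G} (hz : z ∈ Subgroup.center G)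
    (a b : G) : ⁅z * a, b⁆ = ⁅a, b⁆ :=
  calc ⁅z * a, b⁆ = z * (a * b * a⁻¹) * z⁻¹ * b⁻¹ := by group
    _ = (a * b * a⁻¹) * z * z⁻¹ * b⁻¹ := by rw [← Subgroup.mem_center_iff.mp hz]
    _ = ⁅a, b⁆ := by group

theorem commutatorElement_mul_right_of_mem_center {z : G} (hz : z ∈ Subgroup.center G)
    (a b : G) : ⁅a, z * b⁆ = ⁅a, b⁆ := by
  rw [← commutatorElement_inv, commutatorElement_mul_left_of_mem_center hz,
    commutatorElement_inv]

theorem commute_commutatorElement_of_mem_center {h x y : G}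
    (hx : ⁅h, x⁆ ∈ Subgroup.center G) (hy : ⁅h, y⁆ ∈ Subgroup.center G) :
    Commute h ⁅x, y⁆ := by
  have conj_eq : ∀ a : G, h * a * h⁻¹ = ⁅h, a⁆ * a := fun a => by group
  rw [Commute, SemiconjBy, ← mul_inv_eq_iff_eq_mul, conjugate_commutatorElement, conj_eq, conj_eq,
    commutatorElement_mul_left_of_mem_center hx, commutatorElement_mul_right_of_mem_center hy]

end GroupLemmas

theorem one_add_mul_one_add_mul_one_sub_mul_one_sub {A : Type*} [Ring A] {a b : A}
    (haa : a * a = 0) (hbb : b * b = 0) (hba : b * a = 0) :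
    (1 + a) * (1 + b) * (1 - a) * (1 - b) = 1 + a * b := by
  have haba : a * b * a = 0 := by rw [mul_assoc, hba, mul_zero]
  have habb : a * b * b = 0 := by rw [mul_assoc, hbb, mul_zero]
  calc (1 + a) * (1 + b) * (1 - a) * (1 - b)
      = 1 + a * b - a * a - b * a - a * b * a - b * b - a * b * b
        + (a * a + b * a + a * b * a) * b := by noncomm_ring
    _ = 1 + a * b := by simp [haa, hba, haba, hbb, habb]

section RankOneTransv
variable {n : ℕ} {R : Type*} [CommRing R]

theorem det_one_add_vecMulVec {u v : Fin n → R} (h : v ⬝ᵥ u = 0) :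
    det (1 + vecMulVec u v) = 1 := by
  rw [vecMulVec_eq (Fin 1), det_one_add_replicateCol_mul_replicateRow, h, add_zero]

open Classical in
/-- The transvection `1 + u vᵀ` when `v ⬝ᵥ u = 0`; junk value `1` otherwise. -/
noncomputable def rankOneTransv (u v : Fin n → R) : SL n R :=
  if h : v ⬝ᵥ u = 0 then ⟨1 + vecMulVec u v, det_one_add_vecMulVec h⟩ else 1

theorem coe_rankOneTransv {u v : Fin n → R} (h : v ⬝ᵥ u = 0) :
    (rankOneTransv u v : Matrix (Fin n) (Fin n) R) = 1 + vecMulVec u v := by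
  simp [rankOneTransv, h]

theorem rankOneTransv_of_dotProduct_ne_zero {u v : Fin n → R} (h : v ⬝ᵥ u ≠ 0) :
    rankOneTransv u v = 1 := by
  simp [rankOneTransv, h]

@[simp]
theorem rankOneTransv_zero_right (u : Fin n → R) : rankOneTransv u 0 = 1 := by
  apply Subtype.ext
  simp [coe_rankOneTransv]

@[simp]
theorem rankOneTransv_zero_left (v : Fin n → R) : rankOneTransv 0 v = 1 := by
  apply Subtype.ext
  simp [coe_rankOneTransv]

theorem rankOneTransv_mul_rankOneTransv_left {u v v' : Fin n → R} (h : v ⬝ᵥ u = 0)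
    (h' : v' ⬝ᵥ u = 0) : rankOneTransv u v * rankOneTransv u v' = rankOneTransv u (v + v') := by
  apply Subtype.ext
  rw [Matrix.SpecialLinearGroup.coe_mul, coe_rankOneTransv h, coe_rankOneTransv h',
    coe_rankOneTransv (by rw [add_dotProduct, h, h', add_zero]), add_mul, mul_add, mul_add,
    vecMulVec_mul_vecMulVec, h, zero_smul, vecMulVec_zero, vecMulVec_add]
  noncomm_ring

theorem rankOneTransv_mul_rankOneTransv_right {u u' v : Fin n → R} (h : v ⬝ᵥ u = 0)
    (h' : v ⬝ᵥ u' = 0) : rankOneTransv u v * rankOneTransv u' v = rankOneTransv (u + u') v := by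
  apply Subtype.ext
  rw [Matrix.SpecialLinearGroup.coe_mul, coe_rankOneTransv h, coe_rankOneTransv h',
    coe_rankOneTransv (by rw [dotProduct_add, h, h', add_zero]), add_mul, mul_add, mul_add,
    vecMulVec_mul_vecMulVec, h', zero_smul, vecMulVec_zero, add_vecMulVec]
  noncomm_ring

theorem rankOneTransv_inv {u v : Fin n → R} (h : v ⬝ᵥ u = 0) :
    (rankOneTransv u v)⁻¹ = rankOneTransv u (-v) := by
  rw [inv_eq_iff_mul_eq_one, rankOneTransv_mul_rankOneTransv_left h (by simpa), add_neg_cancel,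
    rankOneTransv_zero_right]

theorem rankOneTransv_smul_left (c : R) (u v : Fin n → R) :
    rankOneTransv (c • u) v = rankOneTransv u (c • v) := by
  by_cases h : c * (v ⬝ᵥ u) = 0
  · ext : 1
    rw [coe_rankOneTransv (by simpa using h), coe_rankOneTransv (by simpa using h),
      smul_vecMulVec, vecMulVec_smul]
  · rw [rankOneTransv_of_dotProduct_ne_zero (by simpa using h),
      rankOneTransv_of_dotProduct_ne_zero (by simpa using h)]

theorem rankOneTransv_single_single {i j : Fin n} (h : i ≠ j) (x y : R) :
    rankOneTransv (Pi.single i x) (Pi.single j y) = elemTransv i j h (x * y) := by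
  apply Subtype.ext
  rw [coe_rankOneTransv (by simp [h.symm])]
  ext k l
  simp only [elemTransv, transvection, vecMulVec_apply, Pi.single_apply, Matrix.add_apply,
    Matrix.single_apply]
  grind

theorem vecMul_inv_dotProduct_mulVec (g : SL n R) (x y : Fin n → R) :
    x ᵥ* ((g⁻¹ : SL n R) : Matrix (Fin n) (Fin n) R) ⬝ᵥ (g : Matrix (Fin n) (Fin n) R) *ᵥ y =
      x ⬝ᵥ y := by
  rw [dotProduct_mulVec, vecMul_vecMul, ← Matrix.SpecialLinearGroup.coe_mul, inv_mul_cancel,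
    Matrix.SpecialLinearGroup.coe_one, vecMul_one]

theorem conj_rankOneTransv (g : SL n R) (u v : Fin n → R) :
    g * rankOneTransv u v * g⁻¹ =
      rankOneTransv ((g : Matrix (Fin n) (Fin n) R) *ᵥ u)
        (v ᵥ* ((g⁻¹ : SL n R) : Matrix (Fin n) (Fin n) R)) := by
  have hdot := vecMul_inv_dotProduct_mulVec g v u
  by_cases h : v ⬝ᵥ u = 0
  · ext : 1
    rw [Matrix.SpecialLinearGroup.coe_mul, Matrix.SpecialLinearGroup.coe_mul, coe_rankOneTransv h,
      coe_rankOneTransv (hdot.trans h), mul_add, mul_one, add_mul, mul_vecMulVec, vecMulVec_mul,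
      ← Matrix.SpecialLinearGroup.coe_mul, mul_inv_cancel, Matrix.SpecialLinearGroup.coe_one]
  · rw [rankOneTransv_of_dotProduct_ne_zero h, rankOneTransv_of_dotProduct_ne_zero (hdot ▸ h),
      mul_one, mul_inv_cancel]

theorem rankOneTransv_eq_commutatorElement {u v : Fin n → R} {m : Fin n} (hum : u m = 0)
    (hvm : v m = 0) (hvu : v ⬝ᵥ u = 0) :
    rankOneTransv u v = ⁅rankOneTransv u (Pi.single m 1), rankOneTransv (Pi.single m 1) v⁆ := by
  have hmu : Pi.single m 1 ⬝ᵥ u = 0 := by simp [hum]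
  have hvm' : v ⬝ᵥ Pi.single m 1 = 0 := by simp [hvm]
  apply Subtype.ext
  rw [commutatorElement_def, rankOneTransv_inv hmu, rankOneTransv_inv hvm']
  simp only [Matrix.SpecialLinearGroup.coe_mul]
  rw [coe_rankOneTransv hvu, coe_rankOneTransv hmu, coe_rankOneTransv hvm',
    coe_rankOneTransv (by simpa using hmu), coe_rankOneTransv (by simpa using hvm'),
    vecMulVec_neg, vecMulVec_neg, ← sub_eq_add_neg, ← sub_eq_add_neg,
    one_add_mul_one_add_mul_one_sub_mul_one_sub (by simp [vecMulVec_mul_vecMulVec, hmu])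
      (by simp [vecMulVec_mul_vecMulVec, hvm']) (by simp [vecMulVec_mul_vecMulVec, hvu]),
    vecMulVec_mul_vecMulVec]
  simp

end RankOneTransv

section Elementary
variable {n : ℕ} {R : Type*} [CommRing R]

theorem elemTransv_mul {i j : Fin n} (h : i ≠ j) (x y : R) :
    elemTransv i j h x * elemTransv i j h y = elemTransv i j h (x + y) :=
  Subtype.ext (transvection_mul_transvection_same i j h x y)

@[simp]
theorem elemTransv_zero {i j : Fin n} (h : i ≠ j) : elemTransv i j h (0 : R) = 1 :=
  Subtype.ext (transvection_zero i j)

theorem elemTransv_inv {i j : Fin n} (h : i ≠ j) (t : R) :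
    (elemTransv i j h t)⁻¹ = elemTransv i j h (-t) := by
  rw [inv_eq_iff_mul_eq_one, elemTransv_mul, add_neg_cancel, elemTransv_zero]

theorem commutatorElement_elemTransv {i m j : Fin n} (him : i ≠ m) (hmj : m ≠ j) (hij : i ≠ j)
    (x y : R) : ⁅elemTransv i m him x, elemTransv m j hmj y⁆ = elemTransv i j hij (x * y) :=
  calc ⁅elemTransv i m him x, elemTransv m j hmj y⁆
      = ⁅rankOneTransv (Pi.single i x) (Pi.single m 1),
          rankOneTransv (Pi.single m 1) (Pi.single j y)⁆ := by
        rw [rankOneTransv_single_single him, rankOneTransv_single_single hmj, mul_one, one_mul]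
    _ = rankOneTransv (Pi.single i x) (Pi.single j y) :=
        (rankOneTransv_eq_commutatorElement (by simp [him]) (by simp [hmj])
          (by simp [hij.symm])).symm
    _ = elemTransv i j hij (x * y) := rankOneTransv_single_single hij x y

theorem commutatorElement_elemTransv_eq (g : SL n R) {i j : Fin n} (hij : i ≠ j) (t : R) :
    ⁅g, elemTransv i j hij t⁆ = rankOneTransv ((g : Matrix (Fin n) (Fin n) R) *ᵥ Pi.single i 1)
      (Pi.single j t ᵥ* ((g⁻¹ : SL n R) : Matrix (Fin n) (Fin n) R)) * elemTransv i j hij (-t) := by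
  rw [commutatorElement_def, elemTransv_inv, ← one_mul t, ← rankOneTransv_single_single hij,
    conj_rankOneTransv, one_mul]

theorem elemTransv_mem_Esub {i j : Fin n} (h : i ≠ j) (t : R) :
    elemTransv i j h t ∈ Esub n (Set.univ : Set R) :=
  Subgroup.subset_closure ⟨i, j, h, t, trivial, rfl⟩

theorem elemTransv_mem_relE {a : Ideal R} {i j : Fin n} (h : i ≠ j) {t : R} (ht : t ∈ a) :
    elemTransv i j h t ∈ relE n a :=
  Subgroup.subset_closure ⟨1, one_mem _, _, ⟨i, j, h, t, ht, rfl⟩, by group⟩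

theorem conj_mem_relE {a : Ideal R} {e x : SL n R} (he : e ∈ Esub n (Set.univ : Set R))
    (hx : x ∈ relE n a) : e * x * e⁻¹ ∈ relE n a := by
  suffices relE n a ≤ (relE n a).comap (MulAut.conj e).toMonoidHom from this hx
  refine (Subgroup.closure_le _).mpr ?_
  rintro _ ⟨g, hg, y, hy, rfl⟩
  exact Subgroup.subset_closure ⟨e * g, mul_mem he hg, y, hy, by simp [mul_assoc]⟩

theorem rankOneTransv_sum_right_mem {K : Subgroup (SL n R)} {ι : Type*} (s : Finset ι)
    {u : Fin n → R} {f : ι → Fin n → R} (hf : ∀ k ∈ s, f k ⬝ᵥ u = 0)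
    (hK : ∀ k ∈ s, rankOneTransv u (f k) ∈ K) : rankOneTransv u (∑ k ∈ s, f k) ∈ K :=
  (Finset.sum_induction f (fun w => w ⬝ᵥ u = 0 ∧ rankOneTransv u w ∈ K)
    (fun _ _ ⟨hx, hxK⟩ ⟨hy, hyK⟩ => ⟨by rw [add_dotProduct, hx, hy, add_zero],
      rankOneTransv_mul_rankOneTransv_left hx hy ▸ mul_mem hxK hyK⟩)
    ⟨zero_dotProduct u, by simp⟩ fun k hk => ⟨hf k hk, hK k hk⟩).2

theorem rankOneTransv_sum_left_mem {K : Subgroup (SL n R)} {ι : Type*} (s : Finset ι)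
    {v : Fin n → R} {f : ι → Fin n → R} (hf : ∀ k ∈ s, v ⬝ᵥ f k = 0)
    (hK : ∀ k ∈ s, rankOneTransv (f k) v ∈ K) : rankOneTransv (∑ k ∈ s, f k) v ∈ K :=
  (Finset.sum_induction f (fun w => v ⬝ᵥ w = 0 ∧ rankOneTransv w v ∈ K)
    (fun _ _ ⟨hx, hxK⟩ ⟨hy, hyK⟩ => ⟨by rw [dotProduct_add, hx, hy, add_zero],
      rankOneTransv_mul_rankOneTransv_right hx hy ▸ mul_mem hxK hyK⟩)
    ⟨dotProduct_zero v, by simp⟩ fun k hk => ⟨hf k hk, hK k hk⟩).2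

theorem rankOneTransv_single_left_mem {K : Subgroup (SL n R)} {m : Fin n} {v : Fin n → R}
    (hvm : v m = 0) (hK : ∀ k (hmk : m ≠ k), elemTransv m k hmk (v k) ∈ K) :
    rankOneTransv (Pi.single m 1) v ∈ K := by
  rw [← Finset.univ_sum_single v]
  refine rankOneTransv_sum_right_mem _
    (fun k _ => by by_cases hkm : k = m <;> simp [hkm, hvm]) fun k _ => ?_
  by_cases hmk : m = k
  · simp [← hmk, hvm]
  · simpa [rankOneTransv_single_single hmk] using hK k hmk

theorem rankOneTransv_single_right_mem {K : Subgroup (SL n R)} {m : Fin n} {u : Fin n → R}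
    (hum : u m = 0) (hK : ∀ k (hkm : k ≠ m), elemTransv k m hkm (u k) ∈ K) :
    rankOneTransv u (Pi.single m 1) ∈ K := by
  rw [← Finset.univ_sum_single u]
  refine rankOneTransv_sum_left_mem _
    (fun k _ => by by_cases hkm : k = m <;> simp [hkm, hum]) fun k _ => ?_
  by_cases hkm : k = m
  · simp [hkm, hum]
  · simpa [rankOneTransv_single_single hkm] using hK k hkm

end Elementary

section Suslin
variable {n : ℕ} {R : Type*} [CommRing R]

def skew (u : Fin n → R) (k l : Fin n) : Fin n → R :=
  Pi.single k (u l) - Pi.single l (u k)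

theorem skew_dotProduct (u : Fin n → R) (k l : Fin n) : skew u k l ⬝ᵥ u = 0 := by
  simp [skew, sub_dotProduct, mul_comm]

theorem skew_apply_of_ne {u : Fin n → R} {k l r : Fin n} (hk : r ≠ k) (hl : r ≠ l) :
    skew u k l r = 0 := by
  simp [skew, hk, hl]

theorem sum_smul_skew {u v w : Fin n → R} (hwu : w ⬝ᵥ u = 1) (hvu : v ⬝ᵥ u = 0) :
    ∑ p : Fin n × Fin n, (v p.1 * w p.2) • skew u p.1 p.2 = v := by
  ext r
  calc (∑ p : Fin n × Fin n, (v p.1 * w p.2) • skew u p.1 p.2) r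
      = ∑ l, v r * w l * u l - ∑ k, v k * w r * u k := by
        simp [skew, Fintype.sum_prod_type, mul_sub, Finset.sum_sub_distrib, Pi.single_apply]
    _ = v r * (w ⬝ᵥ u) - w r * (v ⬝ᵥ u) := by
        simp only [dotProduct, Finset.mul_sum]
        congr 1 <;> exact Finset.sum_congr rfl fun _ _ => by ring
    _ = v r := by rw [hwu, hvu, mul_one, mul_zero, sub_zero]

theorem single_add_update_zero (u : Fin n → R) (m : Fin n) :
    Pi.single m (u m) + Function.update u m 0 = u := by
  ext k
  by_cases hkm : k = m <;> simp [hkm]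

theorem dotProduct_update_of_apply_eq_zero {s u : Fin n → R} {m : Fin n} (hsm : s m = 0)
    (c : R) : s ⬝ᵥ Function.update u m c = s ⬝ᵥ u := by
  refine Finset.sum_congr rfl fun k _ => ?_
  rcases eq_or_ne k m with rfl | hkm
  · simp [hsm]
  · simp [hkm]

theorem rankOneTransv_eq_update_mul {u s : Fin n → R} {m : Fin n} (hsm : s m = 0)
    (hsu : s ⬝ᵥ u = 0) :
    rankOneTransv u s =
      rankOneTransv (Function.update u m 0) s * rankOneTransv (Pi.single m 1) (u m • s) := by
  rw [← rankOneTransv_smul_left, ← Pi.single_smul', smul_eq_mul, mul_one,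
    rankOneTransv_mul_rankOneTransv_right ((dotProduct_update_of_apply_eq_zero hsm 0).trans hsu)
      (by simp [hsm]), add_comm, single_add_update_zero]

theorem rankOneTransv_single_right_eq_elemTransv_mul {u : Fin n → R} {i m : Fin n} (him : i ≠ m)
    (hum : u m = 0) : rankOneTransv u (Pi.single m 1) =
      elemTransv i m him (u i) * rankOneTransv (Function.update u i 0) (Pi.single m 1) := by
  rw [← mul_one (u i), ← rankOneTransv_single_single him,
    rankOneTransv_mul_rankOneTransv_right (by simp [him.symm]) (by simp [him.symm, hum]),
    single_add_update_zero]

theorem rankOneTransv_single_smul_skew {u : Fin n → R} {i j m : Fin n} (hmi : m ≠ i) (hmj : m ≠ j)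
    (β : R) : rankOneTransv (Pi.single m 1) (β • skew u j i) =
      elemTransv m j hmj (β * u i) * elemTransv m i hmi (-(β * u j)) := by
  rw [← one_mul (β * u i), ← rankOneTransv_single_single hmj, ← one_mul (-(β * u j)),
    ← rankOneTransv_single_single hmi,
    rankOneTransv_mul_rankOneTransv_left (by simp [hmj.symm]) (by simp [hmi.symm])]
  congr 1
  ext k
  simp only [skew, Pi.smul_apply, Pi.add_apply, Pi.sub_apply, Pi.single_apply, smul_eq_mul]
  split_ifs <;> ring

section Relative
variable {a : Ideal R}

theorem rankOneTransv_mem_relE_of_apply_eq_zero {u v : Fin n → R} {m : Fin n}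
    (hum : u m = 0) (hvm : v m = 0) (hvu : v ⬝ᵥ u = 0) (hva : ∀ l, v l ∈ a) :
    rankOneTransv u v ∈ relE n a := by
  have hX : rankOneTransv u (Pi.single m 1) ∈ Esub n (Set.univ : Set R) :=
    rankOneTransv_single_right_mem hum fun k hkm => elemTransv_mem_Esub hkm (u k)
  have hY : rankOneTransv (Pi.single m 1) v ∈ relE n a :=
    rankOneTransv_single_left_mem hvm fun k hmk => elemTransv_mem_relE hmk (hva k)
  rw [rankOneTransv_eq_commutatorElement hum hvm hvu, commutatorElement_def]
  exact mul_mem (conj_mem_relE hX hY) (inv_mem hY)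

theorem rankOneTransv_smul_skew_mem_relE (hn : 3 ≤ n) (u : Fin n → R) {c : R} (hc : c ∈ a)
    (k l : Fin n) : rankOneTransv u (c • skew u k l) ∈ relE n a := by
  obtain ⟨m, hmk, hml⟩ := Fin.exists_ne_and_ne_of_two_lt k l (by omega)
  have hsm : (c • skew u k l) m = 0 := by simp [skew_apply_of_ne hmk hml]
  have hsu : (c • skew u k l) ⬝ᵥ u = 0 := by simp [skew_dotProduct]
  rw [rankOneTransv_eq_update_mul hsm hsu]
  refine mul_mem (rankOneTransv_mem_relE_of_apply_eq_zero (by simp) hsm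
    ((dotProduct_update_of_apply_eq_zero hsm 0).trans hsu) fun r => a.mul_mem_right _ hc) ?_
  exact rankOneTransv_single_left_mem (by simp [hsm]) fun r hmr =>
    elemTransv_mem_relE hmr (a.mul_mem_left _ (a.mul_mem_right _ hc))

theorem rankOneTransv_sum_smul_skew_mem_relE (hn : 3 ≤ n) (u : Fin n → R)
    (s : Finset (Fin n × Fin n)) {c : Fin n × Fin n → R} (hc : ∀ p ∈ s, c p ∈ a) :
    rankOneTransv u (∑ p ∈ s, c p • skew u p.1 p.2) ∈ relE n a :=
  rankOneTransv_sum_right_mem s (fun p _ => by simp [skew_dotProduct])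
    fun p hp => rankOneTransv_smul_skew_mem_relE hn u (hc p hp) p.1 p.2

theorem rankOneTransv_update_smul_skew_mul_inv_mem_relE {u : Fin n → R} {i j m : Fin n}
    (hij : i ≠ j) (hmi : m ≠ i) (hmj : m ≠ j) (hu : ∀ k, k ≠ i → u k ∈ a) (β : R) :
    rankOneTransv (Function.update u m 0) (β • skew u j i) *
      (elemTransv i j hij (u i * β * u i))⁻¹ ∈ relE n a := by
  have hsm : (β • skew u j i) m = 0 := by simp [skew_apply_of_ne hmj hmi]
  have hP1 : rankOneTransv (Function.update (Function.update u m 0) i 0) (Pi.single m 1) ∈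
      relE n a := by
    refine rankOneTransv_single_right_mem (by simp [hmi]) fun k hkm => elemTransv_mem_relE hkm ?_
    by_cases hki : k = i
    · simp [hki]
    · simpa [hki, hkm] using hu k hki
  have hQ1 : elemTransv m i hmi (-(β * u j)) ∈ relE n a :=
    elemTransv_mem_relE hmi (neg_mem (a.mul_mem_left _ (hu j hij.symm)))
  rw [rankOneTransv_eq_commutatorElement (m := m) (by simp) hsm
      ((dotProduct_update_of_apply_eq_zero hsm 0).trans (by simp [skew_dotProduct])),
    rankOneTransv_single_right_eq_elemTransv_mul hmi.symm (by simp),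
    rankOneTransv_single_smul_skew hmi hmj, Function.update_of_ne hmi.symm, mul_assoc (u i),
    ← commutatorElement_elemTransv hmi.symm hmj hij]
  exact commutatorElement_mul_mul_mul_inv_mem (fun _ he _ hy => conj_mem_relE he hy)
    (elemTransv_mem_Esub _ _) (elemTransv_mem_Esub _ _) hP1 hQ1

theorem rankOneTransv_smul_skew_mul_elemTransv_mem_relE (hn : 3 ≤ n) {u : Fin n → R}
    {i j : Fin n} (hij : i ≠ j) (hu : ∀ k, k ≠ i → u k ∈ a) {β t : R}
    (ht : u i * β * u i - t ∈ a) :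
    rankOneTransv u (β • skew u j i) * elemTransv i j hij (-t) ∈ relE n a := by
  obtain ⟨m, hmi, hmj⟩ := Fin.exists_ne_and_ne_of_two_lt i j (by omega)
  have hsm : (β • skew u j i) m = 0 := by simp [skew_apply_of_ne hmj hmi]
  have hrow : rankOneTransv (Pi.single m 1) (u m • β • skew u j i) ∈ relE n a :=
    rankOneTransv_single_left_mem (by simp [hsm]) fun k hmk =>
      elemTransv_mem_relE hmk (a.mul_mem_right _ (hu m hmi))
  have hdiag : elemTransv i j hij (u i * β * u i) * (elemTransv i j hij t)⁻¹ ∈ relE n a := by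
    rw [elemTransv_inv, elemTransv_mul, ← sub_eq_add_neg]
    exact elemTransv_mem_relE hij ht
  rw [rankOneTransv_eq_update_mul hsm (by simp [skew_dotProduct]), ← elemTransv_inv,
    show ∀ x y d e : SL n R, x * y * e⁻¹ = (x * d⁻¹) * (d * e⁻¹) * (e * y * e⁻¹) by
      intros; group]
  exact mul_mem (mul_mem (rankOneTransv_update_smul_skew_mul_inv_mem_relE hij hmi hmj hu β) hdiag)
    (conj_mem_relE (elemTransv_mem_Esub _ _) hrow)

end Relative

end Suslin

section Congruence
variable {n : ℕ} {R : Type*} [CommRing R] {a : Ideal R}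

theorem redMap_elemTransv {i j : Fin n} (h : i ≠ j) (t : R) :
    redMap n a (elemTransv i j h t) = elemTransv i j h (Ideal.Quotient.mk a t) := by
  apply Subtype.ext
  rw [redMap, Matrix.SpecialLinearGroup.map_apply_coe, RingHom.mapMatrix_apply]
  simp [elemTransv, transvection, Matrix.map_add]

theorem elemTransv_mem_Ccong {i j : Fin n} (h : i ≠ j) {t : R} (ht : t ∈ a) :
    elemTransv i j h t ∈ Ccong n a := by
  rw [Ccong, Subgroup.mem_comap, redMap_elemTransv, Ideal.Quotient.eq_zero_iff_mem.mpr ht,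
    elemTransv_zero]
  exact one_mem _

instance normal_Ccong : (Ccong n a).Normal :=
  Subgroup.normal_comap _

theorem relE_le_Ccong : relE n a ≤ Ccong n a := by
  refine (Subgroup.closure_le _).mpr ?_
  rintro _ ⟨g, -, _, ⟨i, j, h, t, ht, rfl⟩, rfl⟩
  exact Subgroup.Normal.conj_mem inferInstance _ (elemTransv_mem_Ccong h ht) g

theorem commutatorElement_mem_Ccong {g : SL n R} (hg : g ∈ Ccong n a) (x : SL n R) :
    ⁅g, x⁆ ∈ Ccong n a := by
  rw [Ccong, Subgroup.mem_comap, map_commutatorElement,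
    commutatorElement_eq_one_iff_commute.mpr (Subgroup.mem_center_iff.mp hg _).symm]
  exact one_mem _

theorem mem_center_of_forall_commute_elemTransv {S : Type*} [CommRing S] {h : SL n S}
    (H : ∀ i j (hij : i ≠ j) (s : S), Commute h (elemTransv i j hij s)) :
    h ∈ Subgroup.center (SL n S) := by
  obtain ⟨r, hr⟩ := mem_range_scalar_of_commute_transvectionStruct fun t =>
    (congrArg Subtype.val (H t.i t.j t.hij t.c).eq).symm
  refine Subgroup.mem_center_iff.mpr fun B => Subtype.ext ?_
  simpa only [Matrix.SpecialLinearGroup.coe_mul, ← hr] using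
    (scalar_commute r (Commute.all r) B.val).symm.eq

theorem mem_Ccong_of_forall_commutatorElement_mem (hn : 3 ≤ n) {g : SL n R}
    (hg : ∀ x ∈ Esub n (Set.univ : Set R), ⁅g, x⁆ ∈ Ccong n a) : g ∈ Ccong n a := by
  have hcentral : ∀ i j (hij : i ≠ j) (s : R ⧸ a),
      ⁅redMap n a g, elemTransv i j hij s⁆ ∈ Subgroup.center (SL n (R ⧸ a)) := by
    intro i j hij s
    obtain ⟨t, rfl⟩ := Ideal.Quotient.mk_surjective s
    rw [← redMap_elemTransv, ← map_commutatorElement]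
    exact hg _ (elemTransv_mem_Esub hij t)
  refine mem_center_of_forall_commute_elemTransv fun i j hij s => ?_
  obtain ⟨m, hmi, hmj⟩ := Fin.exists_ne_and_ne_of_two_lt i j (by omega)
  rw [← mul_one s, ← commutatorElement_elemTransv hmi.symm hmj hij]
  exact commute_commutatorElement_of_mem_center (hcentral _ _ _ _) (hcentral _ _ _ _)

theorem mk_apply_of_mem_Ccong {g : SL n R} (hg : g ∈ Ccong n a) (i k l : Fin n) :
    Ideal.Quotient.mk a (g k l) = if k = l then Ideal.Quotient.mk a (g i i) else 0 := by
  have := congr_fun₂ (Matrix.SpecialLinearGroup.scalar_eq_self_of_mem_center hg i) k l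
  simpa [redMap, scalar_apply, diagonal_apply, eq_comm] using this.symm

theorem apply_mem_of_mem_Ccong {g : SL n R} (hg : g ∈ Ccong n a) {k l : Fin n} (hkl : k ≠ l) :
    g k l ∈ a :=
  Ideal.Quotient.eq_zero_iff_mem.mp (by rw [mk_apply_of_mem_Ccong hg k, if_neg hkl])

theorem mk_inv_apply_mul_apply_of_mem_Ccong {g : SL n R} (hg : g ∈ Ccong n a) (i j : Fin n) :
    Ideal.Quotient.mk a ((g⁻¹ : SL n R) j j) * Ideal.Quotient.mk a (g i i) = 1 := by
  rw [mk_apply_of_mem_Ccong (inv_mem hg) i j j, if_pos rfl]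
  have := congrArg (Ideal.Quotient.mk a) (congr_fun₂ (congrArg Subtype.val (inv_mul_cancel g)) i i)
  rw [Matrix.SpecialLinearGroup.coe_mul, mul_apply, map_sum, Finset.sum_eq_single i
    (fun l _ hli => by rw [map_mul, mk_apply_of_mem_Ccong hg i l i, if_neg hli, mul_zero])
    (by simp), map_mul] at this
  simpa using this

theorem commutatorElement_elemTransv_mem_relE (hn : 3 ≤ n) {g : SL n R} (hg : g ∈ Ccong n a)
    {i j : Fin n} (hij : i ≠ j) (t : R) : ⁅g, elemTransv i j hij t⁆ ∈ relE n a := by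
  set π := Ideal.Quotient.mk a
  set u := (g : Matrix (Fin n) (Fin n) R) *ᵥ Pi.single i 1
  set v := Pi.single j t ᵥ* ((g⁻¹ : SL n R) : Matrix (Fin n) (Fin n) R)
  set w := Pi.single i 1 ᵥ* ((g⁻¹ : SL n R) : Matrix (Fin n) (Fin n) R)
  have hvu : v ⬝ᵥ u = 0 := (vecMul_inv_dotProduct_mulVec g _ _).trans (by simp [hij])
  have hwu : w ⬝ᵥ u = 1 := (vecMul_inv_dotProduct_mulVec g _ _).trans (by simp)
  have hu_apply : ∀ k, u k = g k i := fun k => by simp only [u, mulVec_single_one, col_apply]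
  have hv_apply : ∀ k, v k = t * (g⁻¹ : SL n R) j k := fun k => by
    simp only [v, single_vecMul, Pi.smul_apply, row_apply, smul_eq_mul]
  have hw_apply : ∀ k, w k = (g⁻¹ : SL n R) i k := fun k => by
    simp only [w, single_one_vecMul, row_apply]
  set c : Fin n × Fin n → R := fun p => v p.1 * w p.2
  have hsplit : rankOneTransv u v = rankOneTransv u (∑ p ∈ Finset.univ.erase (j, i),
      c p • skew u p.1 p.2) * rankOneTransv u (c (j, i) • skew u j i) := by
    rw [rankOneTransv_mul_rankOneTransv_left
      (by simp [sum_dotProduct, skew_dotProduct]) (by simp [skew_dotProduct]),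
      Finset.sum_erase_add _ _ (Finset.mem_univ _), sum_smul_skew hwu hvu]
  have hu : ∀ k, k ≠ i → u k ∈ a := fun k hk => hu_apply k ▸ apply_mem_of_mem_Ccong hg hk
  have hdiag : u i * c (j, i) * u i - t ∈ a := by
    refine Ideal.Quotient.eq_zero_iff_mem.mp ?_
    have hji := mk_inv_apply_mul_apply_of_mem_Ccong hg i j
    have hii := mk_inv_apply_mul_apply_of_mem_Ccong hg i i
    simp only [c, hu_apply, hv_apply, hw_apply, map_sub, map_mul]
    linear_combination π t * (π ((g⁻¹ : SL n R) i i) * π (g i i)) * hji + π t * hii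
  rw [commutatorElement_elemTransv_eq, hsplit, mul_assoc]
  refine mul_mem (rankOneTransv_sum_smul_skew_mem_relE hn u _ fun p hp => ?_)
    (rankOneTransv_smul_skew_mul_elemTransv_mem_relE hn hij hu hdiag)
  by_cases hpj : p.1 = j
  · refine a.mul_mem_left _ (hw_apply p.2 ▸ apply_mem_of_mem_Ccong (inv_mem hg) fun hip => ?_)
    exact (Finset.mem_erase.mp hp).1 (Prod.ext hpj hip.symm)
  · exact a.mul_mem_right _ (hv_apply p.1 ▸ a.mul_mem_left t
      (apply_mem_of_mem_Ccong (inv_mem hg) (Ne.symm hpj)))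

end Congruence

/-- The four possible definitions of the full congruence subgroup coincide:
for `n ≥ 3` and an ideal `𝔞 ⊴ R`, the group `C(n,R,𝔞)` equals each of the sets
`{g : ∀ x ∈ E(n,R), [g,x] ∈ E(n,R,𝔞)}`, `{g : ∀ x ∈ E(n,R), [g,x] ∈ C(n,R,𝔞)}`
and `{g : ∀ x ∈ SL(n,R), [g,x] ∈ C(n,R,𝔞)}`. -/
theorem Ccong_eq_transporter_descriptions
    {R : Type*} [CommRing R] (n : ℕ) (hn : 3 ≤ n) (a : Ideal R) :
    ((Ccong n a : Set (SL n R)) =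
        { g : SL n R | ∀ x ∈ Esub n (Set.univ : Set R), ⁅g, x⁆ ∈ relE n a }) ∧
    ((Ccong n a : Set (SL n R)) =
        { g : SL n R | ∀ x ∈ Esub n (Set.univ : Set R), ⁅g, x⁆ ∈ Ccong n a }) ∧
    ((Ccong n a : Set (SL n R)) =
        { g : SL n R | ∀ x : SL n R, ⁅g, x⁆ ∈ Ccong n a }) := by
  have hrelE : ∀ g ∈ Ccong n a, ∀ x ∈ Esub n (Set.univ : Set R), ⁅g, x⁆ ∈ relE n a :=
    fun g hg x hx => commutatorElement_mem_of_mem_closure (fun _ he _ hy => conj_mem_relE he hy)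
      (by rintro _ ⟨i, j, hij, t, -, rfl⟩
          exact commutatorElement_elemTransv_mem_relE hn hg hij t) hx
  have hCcong : ∀ {g : SL n R}, (∀ x ∈ Esub n (Set.univ : Set R), ⁅g, x⁆ ∈ Ccong n a) →
      g ∈ Ccong n a := mem_Ccong_of_forall_commutatorElement_mem hn
  refine ⟨Set.ext fun g => ⟨hrelE g, fun h => hCcong fun x hx => relE_le_Ccong (h x hx)⟩,
    Set.ext fun g => ⟨fun hg x hx => relE_le_Ccong (hrelE g hg x hx), hCcong⟩,
    Set.ext fun g => ⟨commutatorElement_mem_Ccong, fun h => hCcong fun x _ => h x⟩⟩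
end
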